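/- Let ε > 0 and n, m ∈ ℕ, and let W_{nm} = W^ε_{v_mᵋ}[v_nᵋ] be the cross-Wigner transform of the Hermite functions v_nᵋ and v_mᵋ. Then W_{nm} satisfies the Baker (cosine) bracket eigenvalue equation of the harmonic oscillator: for all (x,p) ∈ ℝ², ((x² + p²)/2)·W_{nm}(x,p) − (ε²/8)·(∂²W_{nm}/∂x² + ∂²W_{nm}/∂p²)(x,p) = ((E_nᵋ + E_mᵋ)/2)·W_{nm}(x,p), where E_kᵋ = (k + 1/2)ε. -/

import Mathlib

open MeasureTheory

/-- The semiclassical cross-Wigner transform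
`W^ε_g[f](x,p) = (2πε)⁻¹ ∫ e^{−ipy/ε} f(x+y/2) conj(g(x−y/2)) dy`. -/
noncomputable def crossWigner (ε : ℝ) (f g : ℝ → ℂ) (x p : ℝ) : ℂ :=
  ((2 * Real.pi * ε : ℝ) : ℂ)⁻¹ *
    ∫ y : ℝ, Complex.exp (-Complex.I * (p : ℂ) * (y : ℂ) / (ε : ℂ)) *
      f (x + y / 2) * (starRingEnd ℂ) (g (x - y / 2))

/-- The nth physicists' Hermite polynomial (as a function). -/
noncomputable def hermitePoly (n : ℕ) (x : ℝ) : ℝ :=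
  (-1 : ℝ) ^ n * Real.exp (x ^ 2) * iteratedDeriv n (fun t : ℝ => Real.exp (-t ^ 2)) x

/-- The semiclassical Hermite function `v_nᵋ`. -/
noncomputable def hermiteFun (ε : ℝ) (n : ℕ) (x : ℝ) : ℝ :=
  (Real.pi * ε) ^ (-(1 / 4 : ℝ)) * ((2 : ℝ) ^ n * (n.factorial : ℝ)) ^ (-(1 / 2 : ℝ)) *
    Real.exp (-x ^ 2 / (2 * ε)) * hermitePoly n (x / Real.sqrt ε)

/-!
Write `v_nᵋ(t) = q(t) e^{-t²/(2ε)}` with a polynomial `q`; such functions are closed under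
`d/dt` and under multiplication by `t`, and they decay like Gaussians, so all the integrals
involved converge and may be differentiated under the integral sign. In the integrand
`e^{-ipy/ε} f(x + y/2) conj g(x - y/2)` of `W_g[f]`:
* `∂ₓ` differentiates both factors: `∂ₓ W_g[f] = W_g[f'] + W_{g'}[f]`;
* `∂ₚ` brings down `-iy/ε`, and `y = (x + y/2) - (x - y/2)`, while `x` is the mean of the two
  arguments, so `∂ₚ` and multiplication by `x` act through multiplication by `t` on `f` and `g`;
* integration by parts in `y` turns multiplication by `ip` into `(ε/2)(W_g[f'] - W_{g'}[f])`.
Squaring these, the cosine bracket `((x² + p²)/2 - (ε²/8)Δ) W_g[f]` equals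
`(W_g[Ĥf] + W_{Ĥg}[f]) / 2`, which is `((E_n + E_m)/2) W_g[f]` for `f = v_n`, `g = v_m`.
-/

open Polynomial Filter Complex ComplexConjugate

def IsGaussianBounded (a : ℝ) (f : ℝ → ℂ) : Prop :=
  Continuous f ∧ ∃ C, ∀ t, ‖f t‖ ≤ C * Real.exp (-a * t ^ 2)

noncomputable def wignerIntegrand (ε : ℝ) (f g : ℝ → ℂ) (x p y : ℝ) : ℂ :=
  cexp (-I * p * y / ε) * f (x + y / 2) * conj (g (x - y / 2))

section CrossWigner

variable {ε a : ℝ} {f f₂ g g₂ f' g' : ℝ → ℂ}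

lemma crossWigner_eq_integral (ε : ℝ) (f g : ℝ → ℂ) (x p : ℝ) :
    crossWigner ε f g x p =
      ((2 * Real.pi * ε : ℝ) : ℂ)⁻¹ * ∫ y, wignerIntegrand ε f g x p y :=
  rfl

lemma norm_cexp_neg_I_mul (ε p y : ℝ) : ‖cexp (-I * p * y / ε)‖ = 1 := by
  rw [show -I * p * y / ε = ((-(p * y / ε) : ℝ) : ℂ) * I by push_cast; ring,
    norm_exp_ofReal_mul_I]

lemma IsGaussianBounded.exists_bound (hf : IsGaussianBounded a f) :
    ∃ C, 0 ≤ C ∧ ∀ t, ‖f t‖ ≤ C * Real.exp (-a * t ^ 2) := by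
  obtain ⟨C, hC⟩ := hf.2
  exact ⟨C, by simpa using (norm_nonneg _).trans (hC 0), hC⟩

/-- Uniform in `x` because `(x + y/2)² + (x - y/2)² ≥ y²/2`. -/
lemma IsGaussianBounded.exists_norm_wignerIntegrand_le (hf : IsGaussianBounded a f)
    (hg : IsGaussianBounded a g) (ha : 0 ≤ a) :
    ∃ C, ∀ x p y, ‖wignerIntegrand ε f g x p y‖ ≤ C * Real.exp (-(a / 2) * y ^ 2) := by
  obtain ⟨Cf, hCf0, hCf⟩ := hf.exists_bound
  obtain ⟨Cg, hCg0, hCg⟩ := hg.exists_bound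
  refine ⟨Cf * Cg, fun x p y => ?_⟩
  have hexp : Real.exp (-a * (x + y / 2) ^ 2) * Real.exp (-a * (x - y / 2) ^ 2)
      ≤ Real.exp (-(a / 2) * y ^ 2) := by
    rw [← Real.exp_add, Real.exp_le_exp]
    nlinarith [mul_nonneg ha (sq_nonneg x)]
  calc ‖wignerIntegrand ε f g x p y‖ = ‖f (x + y / 2)‖ * ‖g (x - y / 2)‖ := by
        simp only [wignerIntegrand, norm_mul, norm_cexp_neg_I_mul, Complex.norm_conj, one_mul]
    _ ≤ (Cf * Real.exp (-a * (x + y / 2) ^ 2)) * (Cg * Real.exp (-a * (x - y / 2) ^ 2)) :=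
        mul_le_mul (hCf _) (hCg _) (norm_nonneg _) (by positivity)
    _ = Cf * Cg * (Real.exp (-a * (x + y / 2) ^ 2) * Real.exp (-a * (x - y / 2) ^ 2)) := by
        ring
    _ ≤ Cf * Cg * Real.exp (-(a / 2) * y ^ 2) := by gcongr

lemma continuous_wignerIntegrand (hf : Continuous f) (hg : Continuous g) (x p : ℝ) :
    Continuous (wignerIntegrand ε f g x p) := by
  unfold wignerIntegrand
  fun_prop

lemma IsGaussianBounded.integrable_wignerIntegrand (hf : IsGaussianBounded a f)
    (hg : IsGaussianBounded a g) (ha : 0 < a) (x p : ℝ) :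
    Integrable (wignerIntegrand ε f g x p) := by
  obtain ⟨C, hC⟩ := hf.exists_norm_wignerIntegrand_le hg (ε := ε) ha.le
  exact ((integrable_exp_neg_mul_sq (half_pos ha)).const_mul C).mono'
    (continuous_wignerIntegrand hf.1 hg.1 x p).aestronglyMeasurable
    (Eventually.of_forall (hC x p))

lemma hasDerivAt_cexp_neg_I_mul (ε c t : ℝ) :
    HasDerivAt (fun t : ℝ => cexp (-I * c * t / ε))
      (-I * c / ε * cexp (-I * c * t / ε)) t := by
  have hlin : HasDerivAt (fun t : ℝ => -I * c * t / ε) (-I * c / ε) t := by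
    simpa using (((hasDerivAt_id t).ofReal_comp.const_mul (-I * c))).div_const (ε : ℂ)
  simpa [mul_comm] using hlin.cexp

lemma hasDerivAt_wignerIntegrand_x (hdf : ∀ t, HasDerivAt f (f' t) t)
    (hdg : ∀ t, HasDerivAt g (g' t) t) (x p y : ℝ) :
    HasDerivAt (fun x => wignerIntegrand ε f g x p y)
      (wignerIntegrand ε f' g x p y + wignerIntegrand ε f g' x p y) x := by
  have hu : HasDerivAt (fun x => f (x + y / 2)) (f' (x + y / 2)) x :=
    (hdf _).comp_add_const x _
  have hv : HasDerivAt (fun x => conj (g (x - y / 2))) (conj (g' (x - y / 2))) x :=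
    ((hdg _).comp_sub_const x _).star
  exact (((hasDerivAt_const x (cexp (-I * p * y / ε))).fun_mul hu).fun_mul hv).congr_deriv
    (by simp only [wignerIntegrand]; ring)

lemma hasDerivAt_wignerIntegrand_p (x p y : ℝ) :
    HasDerivAt (fun p => wignerIntegrand ε f g x p y)
      (-I / ε * (wignerIntegrand ε (fun t => t * f t) g x p y
        - wignerIntegrand ε f (fun t => t * g t) x p y)) p := by
  have he := hasDerivAt_cexp_neg_I_mul ε y p
  simp only [mul_right_comm (-I) (y : ℂ)] at he
  refine ((he.mul_const (f (x + y / 2))).mul_const (conj (g (x - y / 2)))).congr_deriv ?_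
  simp only [wignerIntegrand, map_mul, conj_ofReal]
  push_cast
  ring

lemma hasDerivAt_wignerIntegrand_y (hdf : ∀ t, HasDerivAt f (f' t) t)
    (hdg : ∀ t, HasDerivAt g (g' t) t) (x p y : ℝ) :
    HasDerivAt (wignerIntegrand ε f g x p)
      (-I * p / ε * wignerIntegrand ε f g x p y
        + (wignerIntegrand ε f' g x p y - wignerIntegrand ε f g' x p y) / 2) y := by
  have he := hasDerivAt_cexp_neg_I_mul ε p y
  have hu : HasDerivAt (fun y => f (x + y / 2)) ((1 / 2 : ℝ) • f' (x + y / 2)) y :=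
    (hdf _).scomp y (((hasDerivAt_id y).div_const 2).const_add x)
  have hv : HasDerivAt (fun y => conj (g (x - y / 2)))
      (conj ((-(1 / 2) : ℝ) • g' (x - y / 2))) y :=
    ((hdg _).scomp y (((hasDerivAt_id y).div_const 2).const_sub x)).star
  refine ((he.fun_mul hu).fun_mul hv).congr_deriv ?_
  simp only [wignerIntegrand, Complex.real_smul, map_mul, conj_ofReal]
  push_cast
  ring

lemma crossWigner_sub_left (hf : IsGaussianBounded a f) (hf₂ : IsGaussianBounded a f₂)
    (hg : IsGaussianBounded a g) (ha : 0 < a) (x p : ℝ) :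
    crossWigner ε (f - f₂) g x p = crossWigner ε f g x p - crossWigner ε f₂ g x p := by
  simp only [crossWigner_eq_integral]
  rw [← mul_sub, ← integral_sub (hf.integrable_wignerIntegrand hg ha x p)
    (hf₂.integrable_wignerIntegrand hg ha x p)]
  congr 2 with y
  simp only [wignerIntegrand, Pi.sub_apply]
  ring

lemma crossWigner_sub_right (hf : IsGaussianBounded a f) (hg : IsGaussianBounded a g)
    (hg₂ : IsGaussianBounded a g₂) (ha : 0 < a) (x p : ℝ) :
    crossWigner ε f (g - g₂) x p = crossWigner ε f g x p - crossWigner ε f g₂ x p := by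
  simp only [crossWigner_eq_integral]
  rw [← mul_sub, ← integral_sub (hf.integrable_wignerIntegrand hg ha x p)
    (hf.integrable_wignerIntegrand hg₂ ha x p)]
  congr 2 with y
  simp only [wignerIntegrand, Pi.sub_apply, map_sub]
  ring

lemma crossWigner_const_mul_left (c : ℂ) (x p : ℝ) :
    crossWigner ε (fun t => c * f t) g x p = c * crossWigner ε f g x p := by
  rw [crossWigner_eq_integral, crossWigner_eq_integral, mul_left_comm, ← integral_const_mul c]
  congr 2 with y
  simp only [wignerIntegrand]
  ring

lemma crossWigner_ofReal_mul_right (r : ℝ) (x p : ℝ) :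
    crossWigner ε f (fun t => r * g t) x p = r * crossWigner ε f g x p := by
  rw [crossWigner_eq_integral, crossWigner_eq_integral, mul_left_comm,
    ← integral_const_mul (r : ℂ)]
  congr 2 with y
  simp only [wignerIntegrand, map_mul, conj_ofReal]
  ring

lemma position_mul_crossWigner (hf : IsGaussianBounded a f) (hg : IsGaussianBounded a g)
    (htf : IsGaussianBounded a fun t => t * f t) (htg : IsGaussianBounded a fun t => t * g t)
    (ha : 0 < a) (x p : ℝ) :
    x * crossWigner ε f g x p = (crossWigner ε (fun t => t * f t) g x p
      + crossWigner ε f (fun t => t * g t) x p) / 2 := by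
  have h : ∫ y, x * wignerIntegrand ε f g x p y =
      ((∫ y, wignerIntegrand ε (fun t => t * f t) g x p y)
        + ∫ y, wignerIntegrand ε f (fun t => t * g t) x p y) / 2 := by
    rw [← integral_add (htf.integrable_wignerIntegrand hg ha x p)
      (hf.integrable_wignerIntegrand htg ha x p), ← integral_div]
    congr 1 with y
    simp only [wignerIntegrand, map_mul, conj_ofReal]
    push_cast
    ring
  simp only [crossWigner_eq_integral]
  rw [integral_const_mul] at h
  linear_combination ((2 * Real.pi * ε : ℝ) : ℂ)⁻¹ * h

lemma hasDerivAt_crossWigner_x (hf : IsGaussianBounded a f) (hg : IsGaussianBounded a g)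
    (hf' : IsGaussianBounded a f') (hg' : IsGaussianBounded a g')
    (hdf : ∀ t, HasDerivAt f (f' t) t) (hdg : ∀ t, HasDerivAt g (g' t) t) (ha : 0 < a)
    (x p : ℝ) :
    HasDerivAt (crossWigner ε f g · p) (crossWigner ε f' g x p + crossWigner ε f g' x p) x := by
  obtain ⟨C₁, hC₁⟩ := hf'.exists_norm_wignerIntegrand_le hg (ε := ε) ha.le
  obtain ⟨C₂, hC₂⟩ := hf.exists_norm_wignerIntegrand_le hg' (ε := ε) ha.le
  have hi₁ := hf'.integrable_wignerIntegrand hg (ε := ε) ha x p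
  have hi₂ := hf.integrable_wignerIntegrand hg' (ε := ε) ha x p
  have key := hasDerivAt_integral_of_dominated_loc_of_deriv_le (x₀ := x) (μ := volume)
    (F := fun x y => wignerIntegrand ε f g x p y)
    (bound := fun y => (C₁ + C₂) * Real.exp (-(a / 2) * y ^ 2)) univ_mem
    (Eventually.of_forall fun x => (hf.integrable_wignerIntegrand hg ha x p).aestronglyMeasurable)
    (hf.integrable_wignerIntegrand hg ha x p) (hi₁.add hi₂).aestronglyMeasurable
    (Eventually.of_forall fun y x _ => (norm_add_le _ _).trans
      (by linarith [hC₁ x p y, hC₂ x p y]))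
    ((integrable_exp_neg_mul_sq (half_pos ha)).const_mul _)
    (Eventually.of_forall fun y x _ => hasDerivAt_wignerIntegrand_x hdf hdg x p y)
  rw [crossWigner_eq_integral, crossWigner_eq_integral, ← mul_add, ← integral_add hi₁ hi₂]
  exact key.2.const_mul _

lemma hasDerivAt_crossWigner_p (hf : IsGaussianBounded a f) (hg : IsGaussianBounded a g)
    (htf : IsGaussianBounded a fun t => t * f t) (htg : IsGaussianBounded a fun t => t * g t)
    (ha : 0 < a) (x p : ℝ) :
    HasDerivAt (crossWigner ε f g x ·) (-I / ε * (crossWigner ε (fun t => t * f t) g x p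
      - crossWigner ε f (fun t => t * g t) x p)) p := by
  obtain ⟨C₁, hC₁⟩ := htf.exists_norm_wignerIntegrand_le hg (ε := ε) ha.le
  obtain ⟨C₂, hC₂⟩ := hf.exists_norm_wignerIntegrand_le htg (ε := ε) ha.le
  have hi₁ := htf.integrable_wignerIntegrand hg (ε := ε) ha x p
  have hi₂ := hf.integrable_wignerIntegrand htg (ε := ε) ha x p
  have key := hasDerivAt_integral_of_dominated_loc_of_deriv_le (x₀ := p) (μ := volume)
    (F := fun p y => wignerIntegrand ε f g x p y)
    (bound := fun y => ‖-I / ε‖ * ((C₁ + C₂) * Real.exp (-(a / 2) * y ^ 2))) univ_mem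
    (Eventually.of_forall fun p => (hf.integrable_wignerIntegrand hg ha x p).aestronglyMeasurable)
    (hf.integrable_wignerIntegrand hg ha x p) ((hi₁.sub hi₂).const_mul _).aestronglyMeasurable
    (Eventually.of_forall fun y p _ => by
      rw [norm_mul]
      gcongr
      exact (norm_sub_le _ _).trans (by linarith [hC₁ x p y, hC₂ x p y]))
    (((integrable_exp_neg_mul_sq (half_pos ha)).const_mul _).const_mul _)
    (Eventually.of_forall fun y p _ => hasDerivAt_wignerIntegrand_p x p y)
  rw [crossWigner_eq_integral, crossWigner_eq_integral, ← mul_sub, mul_left_comm,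
    ← integral_sub hi₁ hi₂, ← integral_const_mul]
  exact key.2.const_mul _

/-- Integration by parts in `y`. -/
lemma momentum_mul_crossWigner (hf : IsGaussianBounded a f) (hg : IsGaussianBounded a g)
    (hf' : IsGaussianBounded a f') (hg' : IsGaussianBounded a g')
    (hdf : ∀ t, HasDerivAt f (f' t) t) (hdg : ∀ t, HasDerivAt g (g' t) t) (ha : 0 < a)
    (hε : ε ≠ 0) (x p : ℝ) :
    I * p * crossWigner ε f g x p =
      ε / 2 * (crossWigner ε f' g x p - crossWigner ε f g' x p) := by
  have hi := hf.integrable_wignerIntegrand hg (ε := ε) ha x p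
  have hi₁ := hf'.integrable_wignerIntegrand hg (ε := ε) ha x p
  have hi₂ := hf.integrable_wignerIntegrand hg' (ε := ε) ha x p
  have hi' : Integrable fun y => wignerIntegrand ε f' g x p y - wignerIntegrand ε f g' x p y :=
    hi₁.sub hi₂
  have h0 := integral_eq_zero_of_hasDerivAt_of_integrable
    (hasDerivAt_wignerIntegrand_y hdf hdg x p) ((hi.const_mul _).add (hi'.div_const 2)) hi
  rw [integral_add (hi.const_mul _) (hi'.div_const 2), integral_const_mul,
    integral_div, integral_sub hi₁ hi₂] at h0
  have hε' : (ε : ℂ) ≠ 0 := ofReal_ne_zero.2 hε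
  simp only [crossWigner_eq_integral]
  field_simp at h0
  linear_combination (-((2 * Real.pi * ε : ℝ) : ℂ)⁻¹ / 2) * h0

end CrossWigner

noncomputable def polyGauss (ε : ℝ) (q : ℝ[X]) (t : ℝ) : ℂ :=
  ((q.eval t * Real.exp (-t ^ 2 / (2 * ε)) : ℝ) : ℂ)

noncomputable def gaussDeriv (ε : ℝ) : ℝ[X] →ₗ[ℝ] ℝ[X] :=
  derivative - ε⁻¹ • LinearMap.mulLeft ℝ X

/-- Conjugate of `Ĥᵋ = -(ε²/2) d²/dt² + t²/2` by `q ↦ q(t) e^{-t²/(2ε)}`. -/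
noncomputable def gaussHamiltonian (ε : ℝ) : ℝ[X] →ₗ[ℝ] ℝ[X] :=
  (1 / 2 : ℝ) • (LinearMap.mulLeft ℝ X ∘ₗ LinearMap.mulLeft ℝ X
    - ε ^ 2 • (gaussDeriv ε ∘ₗ gaussDeriv ε))

noncomputable def polyWigner (ε : ℝ) (a b : ℝ[X]) (x p : ℝ) : ℂ :=
  crossWigner ε (polyGauss ε a) (polyGauss ε b) x p

section PolyGauss

variable {ε : ℝ}

lemma hasDerivAt_polyGauss (q : ℝ[X]) (t : ℝ) :
    HasDerivAt (polyGauss ε q) (polyGauss ε (gaussDeriv ε q) t) t := by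
  have he : HasDerivAt (fun t => Real.exp (-t ^ 2 / (2 * ε)))
      (Real.exp (-t ^ 2 / (2 * ε)) * (-(2 * t) / (2 * ε))) t := by
    simpa using (((hasDerivAt_pow 2 t).neg).div_const (2 * ε)).exp
  refine ((q.hasDerivAt t).mul he).ofReal_comp.congr_deriv ?_
  simp only [polyGauss, gaussDeriv, LinearMap.sub_apply, LinearMap.smul_apply,
    LinearMap.mulLeft_apply, eval_sub, eval_smul, eval_mul, eval_X, smul_eq_mul]
  push_cast
  ring

lemma polyGauss_sub (a b : ℝ[X]) : polyGauss ε (a - b) = polyGauss ε a - polyGauss ε b := by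
  ext t
  simp only [polyGauss, eval_sub, Pi.sub_apply]
  push_cast
  ring

lemma polyGauss_smul (c : ℝ) (q : ℝ[X]) :
    polyGauss ε (c • q) = fun t => c * polyGauss ε q t := by
  ext t
  simp only [polyGauss, eval_smul, smul_eq_mul]
  push_cast
  ring

lemma polyGauss_X_mul (q : ℝ[X]) : polyGauss ε (X * q) = fun t => t * polyGauss ε q t := by
  ext t
  simp only [polyGauss, eval_mul, eval_X]
  push_cast
  ring

lemma tendsto_eval_mul_exp_neg_mul_sq_cocompact {b : ℝ} (hb : 0 < b) (q : ℝ[X]) :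
    Tendsto (fun t => q.eval t * Real.exp (-b * t ^ 2)) (cocompact ℝ) (nhds 0) := by
  simp_rw [eval_eq_sum_range, Finset.sum_mul]
  rw [show (0 : ℝ) = ∑ i ∈ Finset.range (q.natDegree + 1), q.coeff i * 0 by simp]
  refine tendsto_finsetSum _ fun i _ => ?_
  simp_rw [mul_assoc]
  refine (tendsto_zero_iff_norm_tendsto_zero.2 ?_).const_mul _
  simpa [abs_mul, Real.rpow_natCast] using tendsto_rpow_abs_mul_exp_neg_mul_sq_cocompact hb i

/-- Half of the Gaussian absorbs the polynomial, the other half is the bound. -/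
lemma isGaussianBounded_polyGauss (hε : 0 < ε) (q : ℝ[X]) :
    IsGaussianBounded (4 * ε)⁻¹ (polyGauss ε q) := by
  have hcont : Continuous fun t => q.eval t * Real.exp (-(4 * ε)⁻¹ * t ^ 2) := by fun_prop
  have hO := (tendsto_eval_mul_exp_neg_mul_sq_cocompact (b := (4 * ε)⁻¹) (by positivity) q
    ).isBigO_one (F := ℝ)
  obtain ⟨C, hC⟩ := isBounded_iff_forall_norm_le.1 (hcont.isBounded_range_iff_isBigO.2 hO)
  refine ⟨by unfold polyGauss; fun_prop, C, fun t => ?_⟩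
  have hsplit : Real.exp (-t ^ 2 / (2 * ε))
      = Real.exp (-(4 * ε)⁻¹ * t ^ 2) * Real.exp (-(4 * ε)⁻¹ * t ^ 2) := by
    rw [← Real.exp_add]
    congr 1
    field_simp
    ring
  calc ‖polyGauss ε q t‖
      = ‖q.eval t * Real.exp (-(4 * ε)⁻¹ * t ^ 2)‖ * Real.exp (-(4 * ε)⁻¹ * t ^ 2) := by
        rw [polyGauss, norm_real, hsplit, ← mul_assoc, norm_mul (_ * _),
          Real.norm_of_nonneg (Real.exp_pos _).le]
    _ ≤ C * Real.exp (-(4 * ε)⁻¹ * t ^ 2) := by gcongr; exact hC _ ⟨t, rfl⟩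

end PolyGauss

section PolyWigner

variable {ε : ℝ}

local notation "D" => gaussDeriv ε

lemma polyWigner_sub_left (hε : 0 < ε) (a₁ a₂ b : ℝ[X]) (x p : ℝ) :
    polyWigner ε (a₁ - a₂) b x p = polyWigner ε a₁ b x p - polyWigner ε a₂ b x p := by
  rw [polyWigner, polyGauss_sub]
  exact crossWigner_sub_left (isGaussianBounded_polyGauss hε _)
    (isGaussianBounded_polyGauss hε _) (isGaussianBounded_polyGauss hε _) (by positivity) x p

lemma polyWigner_sub_right (hε : 0 < ε) (a b₁ b₂ : ℝ[X]) (x p : ℝ) :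
    polyWigner ε a (b₁ - b₂) x p = polyWigner ε a b₁ x p - polyWigner ε a b₂ x p := by
  rw [polyWigner, polyGauss_sub]
  exact crossWigner_sub_right (isGaussianBounded_polyGauss hε _)
    (isGaussianBounded_polyGauss hε _) (isGaussianBounded_polyGauss hε _) (by positivity) x p

lemma polyWigner_smul_left (c : ℝ) (a b : ℝ[X]) (x p : ℝ) :
    polyWigner ε (c • a) b x p = c * polyWigner ε a b x p := by
  rw [polyWigner, polyGauss_smul, crossWigner_const_mul_left, polyWigner]

lemma polyWigner_smul_right (c : ℝ) (a b : ℝ[X]) (x p : ℝ) :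
    polyWigner ε a (c • b) x p = c * polyWigner ε a b x p := by
  rw [polyWigner, polyGauss_smul, crossWigner_ofReal_mul_right, polyWigner]

lemma position_mul_polyWigner (hε : 0 < ε) (a b : ℝ[X]) (x p : ℝ) :
    x * polyWigner ε a b x p =
      (polyWigner ε (X * a) b x p + polyWigner ε a (X * b) x p) / 2 := by
  simp only [polyWigner, polyGauss_X_mul]
  refine position_mul_crossWigner (isGaussianBounded_polyGauss hε a)
    (isGaussianBounded_polyGauss hε b) ?_ ?_ (by positivity) x p
  · exact polyGauss_X_mul (ε := ε) a ▸ isGaussianBounded_polyGauss hε (X * a)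
  · exact polyGauss_X_mul (ε := ε) b ▸ isGaussianBounded_polyGauss hε (X * b)

lemma momentum_mul_polyWigner (hε : 0 < ε) (a b : ℝ[X]) (x p : ℝ) :
    I * p * polyWigner ε a b x p =
      ε / 2 * (polyWigner ε (D a) b x p - polyWigner ε a (D b) x p) :=
  momentum_mul_crossWigner (isGaussianBounded_polyGauss hε a) (isGaussianBounded_polyGauss hε b)
    (isGaussianBounded_polyGauss hε _) (isGaussianBounded_polyGauss hε _)
    (hasDerivAt_polyGauss a) (hasDerivAt_polyGauss b) (by positivity) hε.ne' x p

lemma hasDerivAt_polyWigner_x (hε : 0 < ε) (a b : ℝ[X]) (x p : ℝ) :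
    HasDerivAt (polyWigner ε a b · p) (polyWigner ε (D a) b x p + polyWigner ε a (D b) x p) x :=
  hasDerivAt_crossWigner_x (isGaussianBounded_polyGauss hε a) (isGaussianBounded_polyGauss hε b)
    (isGaussianBounded_polyGauss hε _) (isGaussianBounded_polyGauss hε _)
    (hasDerivAt_polyGauss a) (hasDerivAt_polyGauss b) (by positivity) x p

lemma hasDerivAt_polyWigner_p (hε : 0 < ε) (a b : ℝ[X]) (x p : ℝ) :
    HasDerivAt (polyWigner ε a b x ·)
      (-I / ε * (polyWigner ε (X * a) b x p - polyWigner ε a (X * b) x p)) p := by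
  simp only [polyWigner, polyGauss_X_mul]
  refine hasDerivAt_crossWigner_p (isGaussianBounded_polyGauss hε a)
    (isGaussianBounded_polyGauss hε b) ?_ ?_ (by positivity) x p
  · exact polyGauss_X_mul (ε := ε) a ▸ isGaussianBounded_polyGauss hε (X * a)
  · exact polyGauss_X_mul (ε := ε) b ▸ isGaussianBounded_polyGauss hε (X * b)

lemma iteratedDeriv_two_polyWigner_x (hε : 0 < ε) (a b : ℝ[X]) (x p : ℝ) :
    iteratedDeriv 2 (polyWigner ε a b · p) x = polyWigner ε (D (D a)) b x p
      + 2 * polyWigner ε (D a) (D b) x p + polyWigner ε a (D (D b)) x p := by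
  have hd : deriv (polyWigner ε a b · p) = fun x =>
      polyWigner ε (D a) b x p + polyWigner ε a (D b) x p :=
    funext fun x => (hasDerivAt_polyWigner_x hε a b x p).deriv
  rw [iteratedDeriv_succ, iteratedDeriv_one, hd,
    ((hasDerivAt_polyWigner_x hε _ b x p).fun_add (hasDerivAt_polyWigner_x hε a _ x p)).deriv]
  ring

lemma iteratedDeriv_two_polyWigner_p (hε : 0 < ε) (a b : ℝ[X]) (x p : ℝ) :
    iteratedDeriv 2 (polyWigner ε a b x ·) p = -(polyWigner ε (X * (X * a)) b x p
      - 2 * polyWigner ε (X * a) (X * b) x p + polyWigner ε a (X * (X * b)) x p) / ε ^ 2 := by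
  have hd : deriv (polyWigner ε a b x ·) = fun p =>
      -I / ε * (polyWigner ε (X * a) b x p - polyWigner ε a (X * b) x p) :=
    funext fun p => (hasDerivAt_polyWigner_p hε a b x p).deriv
  rw [iteratedDeriv_succ, iteratedDeriv_one, hd,
    (((hasDerivAt_polyWigner_p hε _ b x p).fun_sub (hasDerivAt_polyWigner_p hε a _ x p)).const_mul
      _).deriv]
  linear_combination (polyWigner ε (X * (X * a)) b x p - 2 * polyWigner ε (X * a) (X * b) x p
      + polyWigner ε a (X * (X * b)) x p) / ε ^ 2 * I_sq

lemma sq_position_mul_polyWigner (hε : 0 < ε) (a b : ℝ[X]) (x p : ℝ) :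
    (x : ℂ) ^ 2 * polyWigner ε a b x p = (polyWigner ε (X * (X * a)) b x p
      + 2 * polyWigner ε (X * a) (X * b) x p + polyWigner ε a (X * (X * b)) x p) / 4 := by
  linear_combination x * position_mul_polyWigner hε a b x p
    + position_mul_polyWigner hε (X * a) b x p / 2 + position_mul_polyWigner hε a (X * b) x p / 2

lemma sq_momentum_mul_polyWigner (hε : 0 < ε) (a b : ℝ[X]) (x p : ℝ) :
    (p : ℂ) ^ 2 * polyWigner ε a b x p = -ε ^ 2 * (polyWigner ε (D (D a)) b x p
      - 2 * polyWigner ε (D a) (D b) x p + polyWigner ε a (D (D b)) x p) / 4 := by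
  linear_combination (-I * p) * momentum_mul_polyWigner hε a b x p
    - ε / 2 * momentum_mul_polyWigner hε (D a) b x p
    + ε / 2 * momentum_mul_polyWigner hε a (D b) x p
    + p ^ 2 * polyWigner ε a b x p * I_sq

/-- The mixed terms `W(Xa, Xb)` and `W(Da, Db)` cancel between the two squares. -/
lemma baker_polyWigner (hε : 0 < ε) (a b : ℝ[X]) (x p : ℝ) :
    (((x ^ 2 + p ^ 2) / 2 : ℝ) : ℂ) * polyWigner ε a b x p
      - (ε : ℂ) ^ 2 / 8 * (iteratedDeriv 2 (polyWigner ε a b · p) x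
        + iteratedDeriv 2 (polyWigner ε a b x ·) p)
    = (polyWigner ε (gaussHamiltonian ε a) b x p
      + polyWigner ε a (gaussHamiltonian ε b) x p) / 2 := by
  have hH : ∀ q : ℝ[X],
      gaussHamiltonian ε q = (1 / 2 : ℝ) • (X * (X * q) - ε ^ 2 • D (D q)) := fun q => rfl
  have hε' : (ε : ℂ) ^ 2 * ((ε : ℂ) ^ 2)⁻¹ = 1 :=
    mul_inv_cancel₀ (by exact_mod_cast (pow_pos hε 2).ne')
  rw [hH, hH, polyWigner_smul_left, polyWigner_smul_right, polyWigner_sub_left hε,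
    polyWigner_sub_right hε, polyWigner_smul_left, polyWigner_smul_right,
    iteratedDeriv_two_polyWigner_x hε, iteratedDeriv_two_polyWigner_p hε]
  push_cast
  linear_combination sq_position_mul_polyWigner hε a b x p / 2
    + sq_momentum_mul_polyWigner hε a b x p / 2
    + (polyWigner ε (X * (X * a)) b x p - 2 * polyWigner ε (X * a) (X * b) x p
      + polyWigner ε a (X * (X * b)) x p) / 8 * hε'

end PolyWigner

lemma Polynomial.derivative_hermite_succ (n : ℕ) :
    derivative (hermite (n + 1)) = (n + 1 : ℤ[X]) * hermite n := by
  induction n with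
  | zero => simp
  | succ n ih =>
    rw [hermite_succ (n + 1), derivative_sub, derivative_mul, derivative_X, one_mul, ih,
      derivative_mul, hermite_succ n]
    simp only [derivative_add, derivative_natCast, derivative_one]
    push_cast
    ring

lemma Polynomial.derivative_derivative_hermite (n : ℕ) :
    derivative (derivative (hermite n)) =
      X * derivative (hermite n) - (n : ℤ[X]) * hermite n := by
  cases n with
  | zero => simp
  | succ n =>
    rw [derivative_hermite_succ, derivative_mul, hermite_succ]
    simp only [derivative_add, derivative_natCast, derivative_one]
    push_cast
    ring

/-- `Polynomial.hermite` is the probabilists' family `He_n`. -/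
lemma hermitePoly_eq_aeval_hermite (n : ℕ) (x : ℝ) :
    hermitePoly n x = √2 ^ n * aeval (√2 * x) (hermite n) := by
  have h2 : (√2 : ℝ) ^ 2 = 2 := Real.sq_sqrt zero_le_two
  have hg : (fun t : ℝ => Real.exp (-t ^ 2)) = fun t => Real.exp (-((√2 * t) ^ 2 / 2)) := by
    ext t
    rw [mul_pow, h2]
    ring_nf
  rw [hermitePoly, hg, iteratedDeriv_comp_const_mul (f := fun y => Real.exp (-(y ^ 2 / 2)))
    (by fun_prop), iteratedDeriv_eq_iterate]
  beta_reduce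
  rw [deriv_gaussian_eq_hermite_mul_gaussian, mul_pow, h2]
  have hexp : Real.exp (x ^ 2) * Real.exp (-(2 * x ^ 2 / 2)) = 1 := by
    rw [← Real.exp_add]; ring_nf; exact Real.exp_zero
  linear_combination (√2 ^ n * aeval (√2 * x) (hermite n)) * (((-1 : ℝ) ^ n) ^ 2 * hexp
    + (by rw [← pow_mul, mul_comm, pow_mul]; simp : ((-1 : ℝ) ^ n) ^ 2 = 1))

noncomputable def scaledHermite (s : ℝ) (n : ℕ) : ℝ[X] :=
  ((hermite n).map (algebraMap ℤ ℝ)).comp (C s * X)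

/-- With `ε s² = 2` the Gaussian factor matches the Hermite ODE `He'' = X He' - n He`. -/
lemma gaussHamiltonian_scaledHermite {ε s : ℝ} (hε : ε ≠ 0) (hs : ε * s ^ 2 = 2) (n : ℕ) :
    gaussHamiltonian ε (scaledHermite s n) = ((n + 1 / 2) * ε) • scaledHermite s n := by
  unfold scaledHermite
  set r := (hermite n).map (algebraMap ℤ ℝ)
  have hode : derivative (derivative r) = X * derivative r - (n : ℝ[X]) * r := by
    simp only [r, derivative_map, derivative_derivative_hermite, Polynomial.map_sub,
      Polynomial.map_mul, Polynomial.map_X, Polynomial.map_natCast]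
  have hd0 : derivative (r.comp (C s * X)) = C s * (derivative r).comp (C s * X) := by
    simp [derivative_comp]
  have hd1 : derivative ((derivative r).comp (C s * X))
      = C s * (derivative (derivative r)).comp (C s * X) := by
    simp [derivative_comp]
  have hd2 : (derivative (derivative r)).comp (C s * X)
      = C s * X * (derivative r).comp (C s * X) - (n : ℝ[X]) * r.comp (C s * X) := by
    simp [hode, mul_comp]
  have hs' : C ε * C s ^ 2 = (2 : ℝ[X]) := by rw [← C_pow, ← C_mul, hs, C_ofNat]
  have hε' : C ε * C ε⁻¹ = (1 : ℝ[X]) := by rw [← C_mul, mul_inv_cancel₀ hε, C_1]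
  have hhalf : 2 * C (1 / 2 : ℝ) = 1 := by rw [← C_ofNat, ← C_mul]; norm_num
  simp only [gaussHamiltonian, gaussDeriv, LinearMap.smul_apply, LinearMap.sub_apply,
    LinearMap.comp_apply, LinearMap.mulLeft_apply, map_sub, derivative_mul, derivative_X,
    one_mul, hd0, hd1, hd2, smul_eq_C_mul, derivative_C, zero_mul, zero_add, map_mul, map_add,
    map_pow, map_natCast]
  set R0 := r.comp (C s * X)
  set R1 := (derivative r).comp (C s * X)
  linear_combination (n * C ε * R0) * hhalf
    - (C (1 / 2 : ℝ) * (C ε * C s * X * R1 - C ε * n * R0)) * hs'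
    + (C (1 / 2 : ℝ) *
      (2 * C ε * C s * X * R1 + C ε * R0 - X ^ 2 * R0 * (1 + C ε * C ε⁻¹))) * hε'

noncomputable def hermiteFunPoly (ε : ℝ) (n : ℕ) : ℝ[X] :=
  ((Real.pi * ε) ^ (-(1 / 4 : ℝ)) * ((2 : ℝ) ^ n * (n.factorial : ℝ)) ^ (-(1 / 2 : ℝ))
    * √2 ^ n) • scaledHermite (√2 / √ε) n

lemma hermiteFun_eq_polyGauss (ε : ℝ) (n : ℕ) :
    (fun t => (hermiteFun ε n t : ℂ)) = polyGauss ε (hermiteFunPoly ε n) := by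
  ext t
  simp only [polyGauss, hermiteFun, hermiteFunPoly, scaledHermite, hermitePoly_eq_aeval_hermite,
    eval_smul, eval_comp, eval_mul, eval_C, eval_X, eval_map_algebraMap, smul_eq_mul]
  congr 1
  ring_nf

lemma gaussHamiltonian_hermiteFunPoly {ε : ℝ} (hε : 0 < ε) (n : ℕ) :
    gaussHamiltonian ε (hermiteFunPoly ε n) = ((n + 1 / 2) * ε) • hermiteFunPoly ε n := by
  have hs : ε * (√2 / √ε) ^ 2 = 2 := by
    rw [div_pow, Real.sq_sqrt zero_le_two, Real.sq_sqrt hε.le]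
    field_simp
  rw [hermiteFunPoly, map_smul, gaussHamiltonian_scaledHermite hε.ne' hs, smul_comm]

/-- The cross-Wigner transform `W_{nm} = W^ε_{v_mᵋ}[v_nᵋ]` of two Hermite functions
satisfies the Baker (cosine) bracket eigenvalue equation of the harmonic oscillator:
`((x²+p²)/2) W_{nm} − (ε²/8)(∂²_x + ∂²_p) W_{nm} = ((E_nᵋ + E_mᵋ)/2) W_{nm}` with
`E_kᵋ = (k + 1/2)ε`. -/
theorem crossWigner_hermite_baker_bracket_eigen (ε : ℝ) (hε : 0 < ε) (n m : ℕ) :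
    ∀ x p : ℝ,
      (((x ^ 2 + p ^ 2) / 2 : ℝ) : ℂ) *
          crossWigner ε (fun t => (hermiteFun ε n t : ℂ))
            (fun t => (hermiteFun ε m t : ℂ)) x p
        - ((ε : ℂ) ^ 2 / 8) *
            (iteratedDeriv 2 (fun x' : ℝ =>
                crossWigner ε (fun t => (hermiteFun ε n t : ℂ))
                  (fun t => (hermiteFun ε m t : ℂ)) x' p) x
              + iteratedDeriv 2 (fun p' : ℝ =>
                  crossWigner ε (fun t => (hermiteFun ε n t : ℂ))
                    (fun t => (hermiteFun ε m t : ℂ)) x p') p)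
      = (((((n : ℂ) + 1 / 2) * ε) + (((m : ℂ) + 1 / 2) * ε)) / 2) *
          crossWigner ε (fun t => (hermiteFun ε n t : ℂ))
            (fun t => (hermiteFun ε m t : ℂ)) x p := by
  intro x p
  have key := baker_polyWigner hε (hermiteFunPoly ε n) (hermiteFunPoly ε m) x p
  rw [gaussHamiltonian_hermiteFunPoly hε, gaussHamiltonian_hermiteFunPoly hε,
    polyWigner_smul_left, polyWigner_smul_right] at key
  simp only [polyWigner, ← hermiteFun_eq_polyGauss] at key
  push_cast at key ⊢
  linear_combination key
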